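/- For a unit vector k, the matrix exponential of φ·H(k) equals Rodrigues' formula: exp(φ·H(k)) = I + sin(φ)·H(k) + (1 − cos φ)·H(k)². -/

import Mathlib

open Matrix

noncomputable def Hm (B : Fin 3 → ℝ) : Matrix (Fin 3) (Fin 3) ℝ :=
  !![0, B 2, -(B 1); -(B 2), 0, B 0; B 1, -(B 0), 0]

/-!
Since `H(k)³ = -‖k‖² H(k) = -H(k)`, the right-hand side `f φ` satisfies `f' = H(k) f` and
`f 0 = 1`, which characterises `φ ↦ exp (φ • H(k))`.
-/

open NormedSpace

section ExpODE

variable {𝔸 : Type*} [NormedRing 𝔸] [NormedAlgebra ℝ 𝔸] [CompleteSpace 𝔸]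

/-- The product `exp ((t - s) • A) * f s` has derivative zero in `s`; compare `s = t` with `s = 0`. -/
theorem eq_exp_smul_of_hasDerivAt {A : 𝔸} {f : ℝ → 𝔸}
    (hf : ∀ t, HasDerivAt f (A * f t) t) (hf0 : f 0 = 1) (t : ℝ) :
    f t = exp (t • A) := by
  have hderiv : ∀ s : ℝ, HasDerivAt (fun s => exp ((t - s) • A) * f s) 0 s := by
    intro s
    have hexp : HasDerivAt (fun s : ℝ => exp ((t - s) • A)) (-(exp ((t - s) • A) * A)) s := by
      simpa [Function.comp_def] using
        (hasDerivAt_exp_smul_const A (t - s)).scomp s ((hasDerivAt_id s).const_sub t)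
    have h := hexp.mul (hf s)
    rwa [neg_mul, mul_assoc, neg_add_cancel] at h
  simpa [hf0] using is_const_of_deriv_eq_zero (fun s => (hderiv s).differentiableAt)
    (fun s => (hderiv s).deriv) t 0

theorem exp_smul_eq_of_mul_mul_self_eq_neg {A : 𝔸} (hA : A * A * A = -A) (t : ℝ) :
    exp (t • A) = 1 + Real.sin t • A + (1 - Real.cos t) • (A * A) := by
  refine (eq_exp_smul_of_hasDerivAt
    (f := fun s => 1 + Real.sin s • A + (1 - Real.cos s) • (A * A)) (fun s => ?_) (by simp) t).symm
  have hmul : A * (1 + Real.sin s • A + (1 - Real.cos s) • (A * A)) =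
      Real.cos s • A + Real.sin s • (A * A) := by
    rw [mul_add, mul_add, mul_one, mul_smul_comm, mul_smul_comm, ← mul_assoc, hA]
    module
  rw [hmul]
  have h := (((Real.hasDerivAt_sin s).smul_const A).const_add 1).add
    (((Real.hasDerivAt_cos s).const_sub 1).smul_const (A * A))
  rwa [neg_neg] at h

end ExpODE

theorem Hm_mul_Hm_mul_Hm (B : Fin 3 → ℝ) : Hm B * Hm B * Hm B = -(∑ i, B i ^ 2) • Hm B := by
  ext i j
  fin_cases i <;> fin_cases j <;> simp [Hm, Matrix.mul_apply, Fin.sum_univ_three] <;> ring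

-- `exp` only sees the topology, so any submultiplicative norm lets the Banach-algebra lemma apply.
attribute [local instance] Matrix.linftyOpNormedRing Matrix.linftyOpNormedAlgebra

theorem stmt14 (k : Fin 3 → ℝ) (hk : ∑ i, k i ^ 2 = 1) (φ : ℝ) :
    NormedSpace.exp (φ • Hm k) =
      1 + Real.sin φ • Hm k + (1 - Real.cos φ) • (Hm k * Hm k) :=
  exp_smul_eq_of_mul_mul_self_eq_neg (by rw [Hm_mul_Hm_mul_Hm, hk, neg_one_smul]) φ
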